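/- arXiv:1108.6264 — 8 statements merged into one kernel-verified Lean document; each statement's English description precedes it below -/
import Mathlib

section
/- Let φ₁, ..., φ_d : ℂ^d → ℂ be continuous functions, not all identically zero on an open set, such that for every x ∈ ℂ^d one has ⟨x, φ(x)⟩ = 0 (the standard bilinear pairing ∑ x_i φ_i(x) vanishes identically). If the span of φ₁, ..., φ_d has dimension at least 2, then the span of the functions x ↦ x_i φ_j(x), 1 ≤ i, j ≤ d, has dimension at least 2d - 1. -/
/-!
Write `f = φ a`, `g = φ b` for two linearly independent members of the family. For linear forms
`ℓ₁, ℓ₂`, the function `ℓ₁ f + ℓ₂ g` lies in the span of the `x ↦ xᵢ φⱼ(x)`, and the map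
`(ℓ₁, ℓ₂) ↦ ℓ₁ f + ℓ₂ g` has a `2d`-dimensional source, so it suffices that its kernel has
dimension at most one. Given two relations `u₁ f + u₂ g = 0` and `v₁ f + v₂ g = 0`, the
determinant `u₁ v₂ - v₁ u₂` kills `f`; it is an analytic function, so either it vanishes
identically or its nonzero set is dense and `f = 0`. A vanishing determinant forces either
`v = c u`, or `u₂ = c u₁`, in which case `u₁ (f + c g) = 0` contradicts independence.
-/

open Set Submodule

section Analytic

variable {E : Type*} [NormedAddCommGroup E] [NormedSpace ℂ E]

theorem AnalyticOnNhd.dense_ne_zero {p : E → ℂ} (hp : AnalyticOnNhd ℂ p univ) (hp0 : p ≠ 0) :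
    Dense {x | p x ≠ 0} := by
  refine interior_eq_empty_iff_dense_compl.1 (eq_empty_iff_forall_notMem.2 fun x hx => hp0 ?_)
  exact funext fun y => hp.eqOn_zero_of_preconnected_of_eventuallyEq_zero isPreconnected_univ
    (mem_univ x) (mem_interior_iff_mem_nhds.1 hx) (mem_univ y)

theorem AnalyticOnNhd.eq_zero_or_eq_zero_of_mul_continuous {p h : E → ℂ}
    (hp : AnalyticOnNhd ℂ p univ) (hh : Continuous h) (hph : ∀ x, p x * h x = 0) :
    p = 0 ∨ h = 0 :=
  or_iff_not_imp_left.2 fun hp0 => hh.ext_on (hp.dense_ne_zero hp0) continuous_const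
    fun x hx => (mul_eq_zero.1 (hph x)).resolve_left hx

end Analytic

section LinearForms

variable {K E : Type*} [Field K] [AddCommGroup E] [Module K E]

theorem LinearMap.exists_eq_smul_of_ker_le {u v : E →ₗ[K] K} (h : ker u ≤ ker v) :
    ∃ c : K, v = c • u := by
  have := mem_span_of_iInf_ker_le_ker (L := fun _ : Unit => u) (K := v) (by simpa using h)
  simpa [mem_span_singleton, eq_comm] using this

theorem LinearMap.exists_eq_smul_of_mul_eq_mul {u₁ u₂ v₁ v₂ : E →ₗ[K] K}
    (h : ∀ x, u₁ x * v₂ x = v₁ x * u₂ x) (hv : ∀ c : K, v₁ ≠ c • u₁) :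
    ∃ c : K, u₂ = c • u₁ := by
  obtain ⟨w, hw₁, hw₂⟩ : ∃ w, u₁ w = 0 ∧ v₁ w ≠ 0 := by
    by_contra! H
    obtain ⟨c, hc⟩ := exists_eq_smul_of_ker_le fun w (hw : u₁ w = 0) => H w hw
    exact hv c hc
  have h₂ : ∀ y, u₁ y = 0 → v₁ y ≠ 0 → u₂ y = 0 := fun y hy₁ hy₂ => by
    simpa [hy₁, hy₂] using (h y).symm
  refine exists_eq_smul_of_ker_le fun x (hx : u₁ x = 0) => ?_
  show u₂ x = 0
  by_cases hvx : v₁ x = 0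
  · simpa [h₂ w hw₁ hw₂] using h₂ (x + w) (by simp [hx, hw₁]) (by simp [hvx, hw₂])
  · exact h₂ x hx hvx

theorem LinearMap.mul_mem_span_range_coord_mul {ι : Type*} [Fintype ι]
    (ℓ : (ι → K) →ₗ[K] K) (h : (ι → K) → K) :
    (fun x => ℓ x * h x) ∈ span K (Set.range fun i x => x i * h x) := by
  classical
  refine (mem_span_range_iff_exists_fun K).2 ⟨fun i => ℓ fun j => if i = j then 1 else 0, ?_⟩
  ext x
  rw [ℓ.pi_apply_eq_sum_univ x, Finset.sum_apply, Finset.sum_mul]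
  simp only [Pi.smul_apply, smul_eq_mul]
  exact Finset.sum_congr rfl fun i _ => by ring

end LinearForms

theorem exists_linearIndependent_pair_of_two_le_finrank_span {K V ι : Type*} [DivisionRing K]
    [AddCommGroup V] [Module K V] {v : ι → V} (h : 2 ≤ Module.finrank K (span K (range v))) :
    ∃ i j, LinearIndependent K ![v i, v j] := by
  obtain ⟨i, hi⟩ : ∃ i, v i ≠ 0 := by
    by_contra! H
    rw [span_eq_bot.2 (forall_mem_range.2 H), finrank_bot] at h
    omega
  obtain ⟨j, hj⟩ : ∃ j, v j ∉ K ∙ v i := by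
    by_contra! H
    have := Submodule.finrank_mono (span_le.2 (range_subset_iff.2 H))
    rw [finrank_span_singleton hi] at this
    omega
  exact ⟨i, j, (LinearIndependent.pair_iff' hi).2 fun a ha => hj (mem_span_singleton.2 ⟨a, ha⟩)⟩

theorem finrank_strongDual {𝕜 E : Type*} [NontriviallyNormedField 𝕜] [CompleteSpace 𝕜]
    [NormedAddCommGroup E] [NormedSpace 𝕜 E] [FiniteDimensional 𝕜 E] :
    Module.finrank 𝕜 (StrongDual 𝕜 E) = Module.finrank 𝕜 E := by
  rw [← LinearMap.toContinuousLinearMap.finrank_eq, Module.finrank_linearMap_self]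

section Relations

variable {E : Type*} [NormedAddCommGroup E] [NormedSpace ℂ E] {f g : E → ℂ}

variable (f g) in
noncomputable def relationMap : StrongDual ℂ E × StrongDual ℂ E →ₗ[ℂ] E → ℂ where
  toFun ℓ x := ℓ.1 x * f x + ℓ.2 x * g x
  map_add' _ _ := by ext; simp; ring
  map_smul' _ _ := by ext; simp; ring

theorem exists_eq_smul_of_mem_ker_relationMap (hf : Continuous f) (hg : Continuous g)
    (hfg : LinearIndependent ℂ ![f, g]) {u v : StrongDual ℂ E × StrongDual ℂ E}
    (hu : u ∈ LinearMap.ker (relationMap f g)) (hv : v ∈ LinearMap.ker (relationMap f g))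
    (hu0 : u ≠ 0) : ∃ c : ℂ, v = c • u := by
  have hrel : ∀ w ∈ LinearMap.ker (relationMap f g), ∀ x, w.1 x * f x + w.2 x * g x = 0 :=
    fun w hw x => congrFun hw x
  have hind := LinearIndependent.pair_iff.1 hfg
  have snd_eq_zero : ∀ w ∈ LinearMap.ker (relationMap f g), w.1 = 0 → w.2 = 0 := by
    intro w hw h₁
    refine DFunLike.coe_injective (((w.2.analyticOnNhd univ).eq_zero_or_eq_zero_of_mul_continuous
      hg fun x => by simpa [h₁] using hrel w hw x).resolve_right fun hg0 => ?_)
    simpa using hind 0 1 (by simp [hg0])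
  have hu₁ : u.1 ≠ 0 := fun h₁ => hu0 (Prod.ext h₁ (snd_eq_zero u hu h₁))
  have hdet : ∀ x, u.1 x * v.2 x = v.1 x * u.2 x := by
    have hq : AnalyticOnNhd ℂ (fun x => u.1 x * v.2 x - v.1 x * u.2 x) univ :=
      ((u.1.analyticOnNhd _).mul (v.2.analyticOnNhd _)).sub
        ((v.1.analyticOnNhd _).mul (u.2.analyticOnNhd _))
    refine fun x => sub_eq_zero.1 (congrFun ((hq.eq_zero_or_eq_zero_of_mul_continuous hf
      fun x => ?_).resolve_right fun hf0 => ?_) x)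
    · linear_combination v.2 x * hrel u hu x - u.2 x * hrel v hv x
    · simpa using hind 1 0 (by simp [hf0])
  by_cases hv₁ : ∃ c : ℂ, v.1 = c • u.1
  · obtain ⟨c, hc⟩ := hv₁
    have hw : v - c • u ∈ LinearMap.ker (relationMap f g) := sub_mem hv (smul_mem _ c hu)
    exact ⟨c, sub_eq_zero.1 (Prod.ext (by simp [hc]) (snd_eq_zero _ hw (by simp [hc])))⟩
  · push Not at hv₁
    obtain ⟨c, hc⟩ := LinearMap.exists_eq_smul_of_mul_eq_mul (u₁ := u.1.toLinearMap)
      (u₂ := u.2.toLinearMap) (v₁ := v.1.toLinearMap) (v₂ := v.2.toLinearMap) hdet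
      fun c h => hv₁ c (ContinuousLinearMap.coe_injective h)
    have hfc : f + c • g = 0 := by
      refine ((u.1.analyticOnNhd univ).eq_zero_or_eq_zero_of_mul_continuous
        (hf.add (hg.const_smul c)) fun x => ?_).resolve_left fun h => hu₁ (DFunLike.coe_injective h)
      have hcx := congrArg (fun ℓ : E →ₗ[ℂ] ℂ => ℓ x) hc
      simp only [ContinuousLinearMap.coe_coe, LinearMap.smul_apply, smul_eq_mul] at hcx
      simp only [Pi.add_apply, Pi.smul_apply, smul_eq_mul]
      linear_combination hrel u hu x - g x * hcx
    simpa using hind 1 c (by simpa using hfc)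

theorem rank_ker_relationMap_le_one (hf : Continuous f) (hg : Continuous g)
    (hfg : LinearIndependent ℂ ![f, g]) : Module.rank ℂ (LinearMap.ker (relationMap f g)) ≤ 1 := by
  have := Module.Free.of_divisionRing ℂ (LinearMap.ker (relationMap f g))
  rw [rank_submodule_le_one_iff']
  by_cases h : ∃ u ∈ LinearMap.ker (relationMap f g), u ≠ 0
  · obtain ⟨u, hu, hu0⟩ := h
    refine ⟨u, fun v hv => ?_⟩
    obtain ⟨c, rfl⟩ := exists_eq_smul_of_mem_ker_relationMap hf hg hfg hu hv hu0
    exact smul_mem _ c (mem_span_singleton_self u)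
  · push Not at h
    exact ⟨0, fun v hv => by simp [h v hv]⟩

end Relations

theorem stmt1_general (d : ℕ) (φ : Fin d → (Fin d → ℂ) → ℂ)
    (hcont : ∀ j, Continuous (φ j))
    (hspan : 2 ≤ Module.finrank ℂ (Submodule.span ℂ (Set.range φ))) :
    2 * d - 1 ≤ Module.finrank ℂ (Submodule.span ℂ
      {f : (Fin d → ℂ) → ℂ | ∃ (i : Fin d) (j : Fin d), f = fun x => x i * φ j x}) := by
  set S := {f : (Fin d → ℂ) → ℂ | ∃ (i : Fin d) (j : Fin d), f = fun x => x i * φ j x}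
  obtain ⟨a, b, hab⟩ := exists_linearIndependent_pair_of_two_le_finrank_span hspan
  set T := relationMap (φ a) (φ b)
  have hker : Module.finrank ℂ (LinearMap.ker T) ≤ 1 :=
    Module.finrank_le_of_rank_le (rank_ker_relationMap_le_one (hcont a) (hcont b) hab)
  have hspan_mul : ∀ j, span ℂ (Set.range fun i x => x i * φ j x) ≤ span ℂ S :=
    fun j => span_mono (range_subset_iff.2 fun i => ⟨i, j, rfl⟩)
  have hrange : LinearMap.range T ≤ span ℂ S := by
    rintro _ ⟨ℓ, rfl⟩
    exact add_mem (hspan_mul a (ℓ.1.toLinearMap.mul_mem_span_range_coord_mul (φ a)))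
      (hspan_mul b (ℓ.2.toLinearMap.mul_mem_span_range_coord_mul (φ b)))
  have : FiniteDimensional ℂ (span ℂ S) := FiniteDimensional.span_of_finite ℂ <|
    (Set.finite_range fun p : Fin d × Fin d => fun x => x p.1 * φ p.2 x).subset
      fun _ ⟨i, j, hf⟩ => ⟨(i, j), hf.symm⟩
  have hrank := T.finrank_range_add_finrank_ker
  rw [Module.finrank_prod, finrank_strongDual, Module.finrank_fin_fun] at hrank
  have := Submodule.finrank_mono hrange
  omega

/-- continuous `φ₁, ..., φ_d : ℂ^d → ℂ`, not all vanishing on any open set,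
with `∑ i, x i * φ i x = 0` identically; if `span φ` has dimension at least 2 then the
span of the functions `x ↦ x i * φ j x` has dimension at least `2d - 1`. -/
theorem stmt1 (d : ℕ) (hd : 1 ≤ d) (φ : Fin d → (Fin d → ℂ) → ℂ)
    (hcont : ∀ j, Continuous (φ j))
    (hnz : ∀ O : Set (Fin d → ℂ), IsOpen O → O.Nonempty → ∃ x ∈ O, ∃ j, φ j x ≠ 0)
    (horth : ∀ x, ∑ i, x i * φ i x = 0)
    (hspan : 2 ≤ Module.finrank ℂ (Submodule.span ℂ (Set.range φ))) :
    2 * d - 1 ≤ Module.finrank ℂ (Submodule.span ℂ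
      {f : (Fin d → ℂ) → ℂ | ∃ (i : Fin d) (j : Fin d), f = fun x => x i * φ j x}) :=
  stmt1_general d φ hcont hspan
end

section
/- Let x₁, ..., x₅ ∈ ℂ³ and y₁, ..., y₅ ∈ ℂ³ be such that for every choice of three distinct indices i, j, k ∈ {1,...,5}, the vectors x_i, x_j, x_k are linearly independent and the vectors y_i, y_j, y_k are linearly independent. Then the five matrices x_i ⊗ y_i ∈ Mat_{3×3}(ℂ) (i = 1, ..., 5) are linearly independent. -/
/-!
Applying a relation `∑ cᵢ • xᵢ ⊗ yᵢ = 0` to `v = yⱼ ⨯₃ yₖ` kills the terms `j` and `k` and leaves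
a relation `∑ cᵢ (yᵢ ⬝ᵥ v) • xᵢ = 0` among the three remaining `xᵢ`. These are independent, and
`yᵢ ⬝ᵥ yⱼ ⨯₃ yₖ = det ![yᵢ, yⱼ, yₖ] ≠ 0`, so those three `cᵢ` vanish.
-/

open Matrix

variable {K : Type*} [Field K]

theorem dotProduct_cross_ne_zero_of_linearIndependent {u v w : Fin 3 → K}
    (h : LinearIndependent K ![u, v, w]) : u ⬝ᵥ v ⨯₃ w ≠ 0 := by
  rw [triple_product_eq_det]
  exact ((isUnit_iff_isUnit_det _).mp (linearIndependent_rows_iff_isUnit.mp h)).ne_zero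

theorem coeff_zero_eq_zero_of_sum_vecMulVec_eq_zero (x y : Fin 5 → Fin 3 → K)
    (hx : LinearIndependent K ![x 0, x 1, x 2]) (hy : LinearIndependent K ![y 0, y 3, y 4])
    {c : Fin 5 → K} (hc : ∑ i, c i • vecMulVec (x i) (y i) = 0) : c 0 = 0 := by
  set v := y 3 ⨯₃ y 4
  have hv : ∑ i, (c i * (y i ⬝ᵥ v)) • x i = 0 := by
    simpa [sum_mulVec, smul_mulVec, vecMulVec_mulVec, smul_smul] using congrArg (· *ᵥ v) hc
  rw [Fin.sum_univ_five, dot_self_cross, dot_cross_self] at hv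
  simp only [mul_zero, zero_smul, add_zero] at hv
  have h0 : c 0 * (y 0 ⬝ᵥ v) = 0 :=
    Fintype.linearIndependent_iff.mp hx ![_, _, _] (by simpa [Fin.sum_univ_three] using hv) 0
  exact (mul_eq_zero.mp h0).resolve_right (dotProduct_cross_ne_zero_of_linearIndependent hy)

/-- if every three of `x₁, ..., x₅ ∈ ℂ³` are linearly independent and every
three of `y₁, ..., y₅ ∈ ℂ³` are linearly independent, then the five rank-one matrices
`x_i ⊗ y_i` are linearly independent in `Mat₃ₓ₃(ℂ)`. -/
theorem stmt3 (x y : Fin 5 → Fin 3 → ℂ)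
    (hx : ∀ i j k : Fin 5, i ≠ j → i ≠ k → j ≠ k → LinearIndependent ℂ ![x i, x j, x k])
    (hy : ∀ i j k : Fin 5, i ≠ j → i ≠ k → j ≠ k → LinearIndependent ℂ ![y i, y j, y k]) :
    LinearIndependent ℂ (fun i : Fin 5 => Matrix.vecMulVec (x i) (y i)) := by
  refine Fintype.linearIndependent_iff.mpr fun c hc i => ?_
  set σ := Equiv.swap 0 i
  have hσ {a b : Fin 5} (hab : a ≠ b) : σ a ≠ σ b := σ.injective.ne hab
  have hcσ : ∑ a, (c ∘ σ) a • vecMulVec ((x ∘ σ) a) ((y ∘ σ) a) = 0 :=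
    (Equiv.sum_comp σ fun a => c a • vecMulVec (x a) (y a)).trans hc
  simpa [σ] using coeff_zero_eq_zero_of_sum_vecMulVec_eq_zero (x ∘ σ) (y ∘ σ)
    (hx _ _ _ (hσ (by decide)) (hσ (by decide)) (hσ (by decide)))
    (hy _ _ _ (hσ (by decide)) (hσ (by decide)) (hσ (by decide))) hcσ
end

section
/- Let d ≥ 3 and let x, y ∈ ℂ^d be nonzero orthogonal vectors (with respect to the Hermitian inner product). Let S_{x,y} be the intersection, over all pairs of orthogonal subspaces E₊, E₋ of ℂ^d with dim E₊ = d₊ ≥ 2, dim E₋ = d₋ ≥ 2, d₋ < d - 1, x ∈ E₊ and y ∈ E₋, of the spaces E₊ ⊗ E₋ (viewed as subspaces of Mat_{d×d}(ℂ) via rank-considerations: E₊ ⊗ E₋ = span of u ⊗ v with u ∈ E₊, v ∈ E₋). Then S_{x,y} is exactly the one-dimensional space spanned by x ⊗ y. -/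
/-!
Every matrix `M` in the intersection has all its rows in every `E₋` and all its columns in every
`E₊` occurring in it. Extend `x, y` to an orthogonal basis `c` of `ℂ^d` and take `E₊, E₋` spanned
by disjoint sets of basis vectors, the first containing `x`, the second `y`. Since `d₋ ≤ d - 2`,
every basis vector other than `y` can be left out of some such `E₋`, so the rows of `M` are
multiples of `y`; since `d₊ ≤ d - 2`, likewise the columns are multiples of `x`. Hence `M` is a
multiple of `x ⊗ y`.
-/

open Submodule Module Matrix

namespace Matrix

variable {m n R : Type*}

theorem row_mem_of_mem_span_vecMulVec [Semiring R] {E : Submodule R (m → R)}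
    {F : Submodule R (n → R)} {M : Matrix m n R}
    (hM : M ∈ span R {M | ∃ u ∈ E, ∃ v ∈ F, M = vecMulVec u v}) (i : m) : M i ∈ F := by
  have : span R {M | ∃ u ∈ E, ∃ v ∈ F, M = vecMulVec u v} ≤ pi Set.univ fun _ => F :=
    span_le.2 <| by
      rintro _ ⟨u, -, v, hv, rfl⟩ i -
      exact F.smul_mem (u i) hv
  exact mem_pi.1 (this hM) i trivial

theorem col_mem_of_mem_span_vecMulVec [CommSemiring R] {E : Submodule R (m → R)}
    {F : Submodule R (n → R)} {M : Matrix m n R}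
    (hM : M ∈ span R {M | ∃ u ∈ E, ∃ v ∈ F, M = vecMulVec u v}) (j : n) : Mᵀ j ∈ E := by
  have : span R {M | ∃ u ∈ E, ∃ v ∈ F, M = vecMulVec u v} ≤
      (pi Set.univ fun _ => E).comap (transposeLinearEquiv m n R R).toLinearMap :=
    span_le.2 <| by
      rintro _ ⟨u, hu, v, -, rfl⟩ j -
      change (vecMulVec u v)ᵀ j ∈ E
      rw [show (vecMulVec u v)ᵀ j = v j • u by ext i; exact mul_comm _ _]
      exact E.smul_mem (v j) hu
  exact mem_pi.1 (this hM) j trivial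

theorem mem_span_singleton_vecMulVec [Field R] {M : Matrix m n R} {x : m → R} {y : n → R}
    (hy : y ≠ 0) (hrow : ∀ i, M i ∈ R ∙ y) (hcol : ∀ j, Mᵀ j ∈ R ∙ x) :
    M ∈ R ∙ vecMulVec x y := by
  choose a ha using fun i => mem_span_singleton.1 (hrow i)
  obtain ⟨j, hj⟩ : ∃ j, y j ≠ 0 := Function.ne_iff.1 hy
  obtain ⟨t, ht⟩ := mem_span_singleton.1 (hcol j)
  have hMa : M = vecMulVec a y := by
    ext i k
    rw [← ha i]
    rfl
  have hax : a = (t / y j) • x := by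
    ext i
    have := congrFun ht i
    rw [hMa] at this
    simp only [Pi.smul_apply, smul_eq_mul, transpose_apply, vecMulVec_apply] at this ⊢
    field_simp
    linear_combination -this
  rw [hMa, hax, smul_vecMulVec]
  exact smul_mem _ _ (mem_span_singleton_self _)

end Matrix

namespace Finset

variable {ι : Type*} [Fintype ι] [DecidableEq ι]

theorem exists_mem_disjoint_card_eq {a : ι} {t : Finset ι} (ha : a ∉ t) {p : ℕ}
    (hp : 1 ≤ p) (hpt : p + t.card ≤ Fintype.card ι) :
    ∃ s : Finset ι, a ∈ s ∧ Disjoint s t ∧ s.card = p := by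
  obtain ⟨s, has, hst, hs⟩ := exists_subsuperset_card_eq (s := {a}) (t := tᶜ) (n := p)
    (by simpa using ha) (by simpa using hp) (by rw [card_compl]; omega)
  exact ⟨s, singleton_subset_iff.1 has, subset_compl_iff_disjoint_right.1 hst, hs⟩

theorem exists_disjoint_pair_card_eq {i j k : ι} (hij : i ≠ j) (hkj : k ≠ j) {p q : ℕ}
    (hp : 1 ≤ p) (hq : 1 ≤ q) (hq2 : q + 2 ≤ Fintype.card ι) (hpq : p + q ≤ Fintype.card ι) :
    ∃ I J : Finset ι, i ∈ I ∧ j ∈ J ∧ k ∉ J ∧ Disjoint I J ∧ I.card = p ∧ J.card = q := by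
  obtain ⟨J, hjJ, hJ, hJq⟩ := exists_mem_disjoint_card_eq (a := j) (t := {i, k}) (p := q)
    (by simp [hij.symm, hkj.symm]) hq (by linarith [card_le_two (a := i) (b := k)])
  obtain ⟨I, hiI, hIJ, hIp⟩ := exists_mem_disjoint_card_eq (a := i) (t := J) (p := p)
    (disjoint_right.1 hJ (by simp)) hp (by omega)
  exact ⟨I, J, hiI, hjJ, disjoint_right.1 hJ (by simp), hIJ, hIp, hJq⟩

end Finset

namespace Module.Basis

variable {ι R M : Type*} [Semiring R] [AddCommMonoid M] [Module R M]

theorem finrank_span_image [StrongRankCondition R] [Nontrivial R] (b : Basis ι R M) (s : Finset ι) :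
    finrank R (span R (b '' s)) = s.card := by
  rw [Set.image_eq_range, ← Fintype.card_coe s]
  exact finrank_span_eq_card (b.linearIndependent.comp _ Subtype.val_injective)

theorem mem_span_singleton_of_forall_mem_span_image (b : Basis ι R M) {v : M} {i : ι}
    (h : ∀ k ≠ i, ∃ s : Set ι, k ∉ s ∧ v ∈ span R (b '' s)) : v ∈ R ∙ b i := by
  rw [← Set.image_singleton, b.mem_span_image]
  intro k hk
  by_contra hki
  obtain ⟨s, hks, hvs⟩ := h k hki
  exact hks (b.mem_span_image.1 hvs hk)

end Module.Basis

section InnerProductSpace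

variable {𝕜 E ι : Type*} [RCLike 𝕜] [NormedAddCommGroup E] [InnerProductSpace 𝕜 E] [Fintype ι]

theorem exists_orthonormalBasis_span_singleton_eq [FiniteDimensional 𝕜 E]
    (hcard : finrank 𝕜 E = Fintype.card ι) {x y : E} (hx : x ≠ 0) (hy : y ≠ 0)
    (hxy : inner 𝕜 x y = 0) {i j : ι} (hij : i ≠ j) :
    ∃ b : OrthonormalBasis ι 𝕜 E, 𝕜 ∙ b i = 𝕜 ∙ x ∧ 𝕜 ∙ b j = 𝕜 ∙ y := by
  classical
  let v : ι → E := fun k => if k = i then (‖x‖⁻¹ : 𝕜) • x else (‖y‖⁻¹ : 𝕜) • y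
  have hv : Orthonormal 𝕜 (({i, j} : Set ι).domRestrict v) := by
    have hyx : inner 𝕜 y x = 0 := inner_eq_zero_symm.1 hxy
    rw [orthonormal_iff_ite]
    rintro ⟨k, rfl | rfl⟩ ⟨l, rfl | rfl⟩ <;>
      simp [v, hij, hij.symm, Subtype.ext_iff, inner_smul_left, inner_smul_right, hxy, hyx,
        inner_self_eq_norm_sq_to_K, hx, hy]
  obtain ⟨b, hb⟩ := hv.exists_orthonormalBasis_extension_of_card_eq hcard
  have hvi : v i = (‖x‖⁻¹ : 𝕜) • x := if_pos rfl
  have hvj : v j = (‖y‖⁻¹ : 𝕜) • y := if_neg hij.symm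
  refine ⟨b, ?_, ?_⟩
  · rw [hb i (by simp), hvi]
    exact span_singleton_smul_eq (by simpa using hx) x
  · rw [hb j (by simp), hvj]
    exact span_singleton_smul_eq (by simpa using hy) y

end InnerProductSpace

section DotProduct

variable {𝕜 n ι : Type*} [RCLike 𝕜] [Fintype n]

theorem star_dotProduct_eq_zero_of_mem_span {s t : Set (n → 𝕜)}
    (h : ∀ u ∈ s, ∀ v ∈ t, star u ⬝ᵥ v = 0) {u v : n → 𝕜} (hu : u ∈ span 𝕜 s)
    (hv : v ∈ span 𝕜 t) : star u ⬝ᵥ v = 0 := by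
  let L := (WithLp.linearEquiv 2 𝕜 (n → 𝕜)).symm.toLinearMap
  have hst : span 𝕜 (L '' s) ⟂ span 𝕜 (L '' t) := by
    rw [isOrtho_span]
    rintro _ ⟨u, hu, rfl⟩ _ ⟨v, hv, rfl⟩
    rw [← h u hu v hv]
    exact dotProduct_comm _ _
  have := hst.inner_eq (apply_mem_span_image_of_mem_span L hu)
    (apply_mem_span_image_of_mem_span L hv)
  rwa [dotProduct_comm]

theorem star_dotProduct_eq_zero_of_disjoint {c : ι → n → 𝕜}
    (hc : Pairwise fun k l => star (c k) ⬝ᵥ c l = 0) {I J : Set ι} (hIJ : Disjoint I J)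
    {u v : n → 𝕜} (hu : u ∈ span 𝕜 (c '' I)) (hv : v ∈ span 𝕜 (c '' J)) : star u ⬝ᵥ v = 0 := by
  refine star_dotProduct_eq_zero_of_mem_span ?_ hu hv
  rintro _ ⟨k, hk, rfl⟩ _ ⟨l, hl, rfl⟩
  exact hc fun hkl => Set.disjoint_left.1 hIJ hk (hkl ▸ hl)

theorem exists_basis_pairwise_star_dotProduct_eq_zero [Fintype ι]
    (hcard : Fintype.card ι = Fintype.card n) {x y : n → 𝕜} (hx : x ≠ 0) (hy : y ≠ 0)
    (hxy : star x ⬝ᵥ y = 0) {i j : ι} (hij : i ≠ j) :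
    ∃ c : Basis ι 𝕜 (n → 𝕜), Pairwise (fun k l => star (c k) ⬝ᵥ c l = 0) ∧
      𝕜 ∙ c i = 𝕜 ∙ x ∧ 𝕜 ∙ c j = 𝕜 ∙ y := by
  let L := WithLp.linearEquiv 2 𝕜 (n → 𝕜)
  obtain ⟨b, hbx, hby⟩ := exists_orthonormalBasis_span_singleton_eq
    (by rw [finrank_euclideanSpace, hcard]) (x := WithLp.toLp 2 x) (y := WithLp.toLp 2 y)
    (by simpa using hx) (by simpa using hy) (by rw [← hxy]; exact dotProduct_comm _ _) hij
  have hspan : ∀ k (z : n → 𝕜), 𝕜 ∙ b k = 𝕜 ∙ WithLp.toLp 2 z →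
      𝕜 ∙ b.toBasis.map L k = 𝕜 ∙ z := by
    intro k z h
    simpa [map_span, L] using congrArg (map L.toLinearMap) h
  refine ⟨b.toBasis.map L, fun k l hkl => ?_, hspan i x hbx, hspan j y hby⟩
  exact (dotProduct_comm _ _).trans (b.orthonormal.2 hkl)

end DotProduct

theorem stmt4_general (d dp dm : ℕ) (hdp : 2 ≤ dp) (hdm : 2 ≤ dm)
    (hdm' : dm < d - 1) (hsum : dp + dm ≤ d)
    (x y : Fin d → ℂ) (hx : x ≠ 0) (hy : y ≠ 0)
    (hxy : dotProduct (star x) y = 0) :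
    sInf {S : Submodule ℂ (Matrix (Fin d) (Fin d) ℂ) |
        ∃ E F : Submodule ℂ (Fin d → ℂ),
          Module.finrank ℂ E = dp ∧ Module.finrank ℂ F = dm ∧
          (∀ u ∈ E, ∀ v ∈ F, dotProduct (star u) v = 0) ∧
          x ∈ E ∧ y ∈ F ∧
          S = Submodule.span ℂ
            {M : Matrix (Fin d) (Fin d) ℂ | ∃ u ∈ E, ∃ v ∈ F, M = Matrix.vecMulVec u v}}
      = Submodule.span ℂ {Matrix.vecMulVec x y} := by
  refine le_antisymm (fun M hM => ?_) (span_le.2 ?_)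
  · obtain ⟨i₀, i₁, hi⟩ :=
      Fintype.exists_pair_of_one_lt_card (α := Fin d) (by rw [Fintype.card_fin]; omega)
    obtain ⟨c, hc, hcx, hcy⟩ := exists_basis_pairwise_star_dotProduct_eq_zero rfl hx hy hxy hi
    have hmem : ∀ I J : Finset (Fin d), i₀ ∈ I → i₁ ∈ J → Disjoint I J → I.card = dp →
        J.card = dm →
        M ∈ span ℂ {N | ∃ u ∈ span ℂ (c '' I), ∃ v ∈ span ℂ (c '' J), N = vecMulVec u v} := by
      intro I J hI hJ hIJ hIp hJq
      refine mem_sInf.1 hM _ ⟨_, _, by rw [c.finrank_span_image, hIp],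
        by rw [c.finrank_span_image, hJq],
        fun u hu v hv => star_dotProduct_eq_zero_of_disjoint hc (Finset.disjoint_coe.2 hIJ) hu hv,
        span_mono (Set.singleton_subset_iff.2 (Set.mem_image_of_mem c hI))
          (hcx ▸ mem_span_singleton_self x),
        span_mono (Set.singleton_subset_iff.2 (Set.mem_image_of_mem c hJ))
          (hcy ▸ mem_span_singleton_self y), rfl⟩
    have hrow : ∀ i, M i ∈ ℂ ∙ y := fun i =>
      hcy ▸ c.mem_span_singleton_of_forall_mem_span_image fun k hk => by
        obtain ⟨I, J, hI, hJ, hkJ, hIJ, hIp, hJq⟩ :=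
          Finset.exists_disjoint_pair_card_eq (p := dp) (q := dm) hi hk (by omega) (by omega)
            (by rw [Fintype.card_fin]; omega) (by rw [Fintype.card_fin]; omega)
        exact ⟨J, hkJ, row_mem_of_mem_span_vecMulVec (hmem I J hI hJ hIJ hIp hJq) i⟩
    have hcol : ∀ j, Mᵀ j ∈ ℂ ∙ x := fun j =>
      hcx ▸ c.mem_span_singleton_of_forall_mem_span_image fun k hk => by
        obtain ⟨J, I, hJ, hI, hkI, hJI, hJq, hIp⟩ :=
          Finset.exists_disjoint_pair_card_eq (p := dm) (q := dp) hi.symm hk (by omega) (by omega)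
            (by rw [Fintype.card_fin]; omega) (by rw [Fintype.card_fin]; omega)
        exact ⟨I, hkI, col_mem_of_mem_span_vecMulVec (hmem I J hI hJ hJI.symm hIp hJq) j⟩
    exact mem_span_singleton_vecMulVec hy hrow hcol
  · rintro _ rfl
    exact mem_sInf.2 fun S ⟨E, F, _, _, _, hxE, hyF, hS⟩ => hS ▸ subset_span ⟨x, hxE, y, hyF, rfl⟩

/-- for nonzero orthogonal `x, y ∈ ℂ^d`, the intersection of the spaces
`E₊ ⊗ E₋ ⊆ Mat_{d×d}(ℂ)` over all pairs of orthogonal subspaces `E₊, E₋` with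
`dim E₊ = d₊ ≥ 2`, `dim E₋ = d₋ ≥ 2`, `d₋ < d - 1`, `x ∈ E₊`, `y ∈ E₋` is exactly
the line spanned by `x ⊗ y`. -/
theorem stmt4 (d dp dm : ℕ) (hd : 3 ≤ d) (hdp : 2 ≤ dp) (hdm : 2 ≤ dm)
    (hdm' : dm < d - 1) (hsum : dp + dm ≤ d)
    (x y : Fin d → ℂ) (hx : x ≠ 0) (hy : y ≠ 0)
    (hxy : dotProduct (star x) y = 0) :
    sInf {S : Submodule ℂ (Matrix (Fin d) (Fin d) ℂ) |
        ∃ E F : Submodule ℂ (Fin d → ℂ),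
          Module.finrank ℂ E = dp ∧ Module.finrank ℂ F = dm ∧
          (∀ u ∈ E, ∀ v ∈ F, dotProduct (star u) v = 0) ∧
          x ∈ E ∧ y ∈ F ∧
          S = Submodule.span ℂ
            {M : Matrix (Fin d) (Fin d) ℂ | ∃ u ∈ E, ∃ v ∈ F, M = Matrix.vecMulVec u v}}
      = Submodule.span ℂ {Matrix.vecMulVec x y} :=
  stmt4_general d dp dm hdp hdm hdm' hsum x y hx hy hxy
end

section
/- Let A ⊆ ℂ be a finite δ-separated set with z₀ ∈ A, t₀ > δ, z₁ ∈ A with |z₀ - z₁| = t₀, and assume |A ∩ B(z₀, t₀)| ≥ t₀^{σ/2}|A| and |A ∩ B(z, t)| ≤ (2t)^{σ/2}|A| for all δ < t ≤ t₀, z ∈ ℂ. Define A₁ = (z₁ - z₀)^{-1}((A - z₀) ∩ B(0, t₀)). Then for all δ/t₀ < t < 1 and z ∈ ℂ, |A₁ ∩ B(z, t)| ≤ (2t)^{σ/2}|A₁|. -/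
/-! The rescaling `w ↦ (z₁ - z₀)⁻¹ (w - z₀)` is injective and pulls `B(z, t)` back to a disc of
radius `t₀ t`, with `δ < t₀ t ≤ t₀`. So `|A₁ ∩ B(z, t)|` is at most the number of points of `A` in
that disc, which the non-concentration hypothesis bounds by `(2 t₀ t)^{σ/2} |A|`; splitting off the
factor `t₀^{σ/2}` and using `t₀^{σ/2} |A| ≤ |A ∩ B(z₀, t₀)| = |A₁|` gives the claim. -/

open Metric

section Rescale

variable {𝕜 : Type*} [NormedDivisionRing 𝕜]

theorem injective_inv_mul_sub {c : 𝕜} (hc : c ≠ 0) (z₀ : 𝕜) :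
    Function.Injective fun w => c⁻¹ * (w - z₀) :=
  (mul_right_injective₀ (inv_ne_zero hc)).comp (sub_left_injective (b := z₀))

theorem preimage_inv_mul_sub_closedBall {c : 𝕜} (hc : c ≠ 0) (z₀ z : 𝕜) (t : ℝ) :
    (fun w => c⁻¹ * (w - z₀)) ⁻¹' closedBall z t = closedBall (z₀ + c * z) (‖c‖ * t) := by
  ext w
  have hsub : c⁻¹ * (w - z₀) - z = c⁻¹ * (w - (z₀ + c * z)) := by
    rw [mul_sub c⁻¹ w (z₀ + c * z), mul_add, inv_mul_cancel_left₀ hc, mul_sub, sub_add_eq_sub_sub]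
  simp only [Set.mem_preimage, mem_closedBall, dist_eq_norm, hsub, norm_mul, norm_inv,
    inv_mul_le_iff₀ (norm_pos_iff.mpr hc)]

theorem ncard_inv_mul_sub_image_inter_closedBall {c : 𝕜} (hc : c ≠ 0) (z₀ z : 𝕜) (t : ℝ)
    (S : Set 𝕜) :
    ((fun w => c⁻¹ * (w - z₀)) '' S ∩ closedBall z t).ncard
      = (S ∩ closedBall (z₀ + c * z) (‖c‖ * t)).ncard := by
  rw [← Set.image_inter_preimage, preimage_inv_mul_sub_closedBall hc,
    Set.ncard_image_of_injective _ (injective_inv_mul_sub hc z₀)]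

end Rescale

theorem stmt7_general (δ σ t₀ : ℝ) (A : Set ℂ) (z₀ z₁ : ℂ)
    (hδ : 0 < δ) (hfin : A.Finite)
    (ht₀ : δ < t₀) (hdist : dist z₀ z₁ = t₀)
    (hlarge : t₀ ^ (σ / 2) * (A.ncard : ℝ) ≤ ((A ∩ Metric.closedBall z₀ t₀).ncard : ℝ))
    (hnc : ∀ (z : ℂ) (t : ℝ), δ < t → t ≤ t₀ →
      ((A ∩ Metric.closedBall z t).ncard : ℝ) ≤ (2 * t) ^ (σ / 2) * (A.ncard : ℝ)) :
    ∀ (z : ℂ) (t : ℝ), δ / t₀ < t → t < 1 →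
      ((((fun w => (z₁ - z₀)⁻¹ * (w - z₀)) '' (A ∩ Metric.closedBall z₀ t₀)) ∩
          Metric.closedBall z t).ncard : ℝ)
        ≤ (2 * t) ^ (σ / 2) *
          (((fun w => (z₁ - z₀)⁻¹ * (w - z₀)) '' (A ∩ Metric.closedBall z₀ t₀)).ncard : ℝ) := by
  intro z t hδt ht1
  have ht₀pos : 0 < t₀ := hδ.trans ht₀
  have hnorm : ‖z₁ - z₀‖ = t₀ := by rw [← dist_eq_norm, dist_comm, hdist]
  have hc : z₁ - z₀ ≠ 0 := norm_ne_zero_iff.mp (hnorm ▸ ht₀pos.ne')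
  have hδ_lt : δ < t₀ * t := by rwa [div_lt_iff₀ ht₀pos, mul_comm] at hδt
  have htpos : 0 < t := (div_pos hδ ht₀pos).trans hδt
  have hle : t₀ * t ≤ t₀ := mul_le_of_le_one_right ht₀pos.le ht1.le
  set S := A ∩ closedBall z₀ t₀
  set w := z₀ + (z₁ - z₀) * z
  rw [ncard_inv_mul_sub_image_inter_closedBall hc, hnorm,
    Set.ncard_image_of_injective _ (injective_inv_mul_sub hc z₀)]
  calc ((S ∩ closedBall w (t₀ * t)).ncard : ℝ)
      ≤ (A ∩ closedBall w (t₀ * t)).ncard := by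
        exact_mod_cast Set.ncard_le_ncard (Set.inter_subset_inter_left _ Set.inter_subset_left)
          (hfin.inter_of_left _)
    _ ≤ (2 * (t₀ * t)) ^ (σ / 2) * A.ncard := hnc w _ hδ_lt hle
    _ = (2 * t) ^ (σ / 2) * (t₀ ^ (σ / 2) * A.ncard) := by
        rw [mul_left_comm, Real.mul_rpow ht₀pos.le (by positivity)]; ring
    _ ≤ (2 * t) ^ (σ / 2) * S.ncard := by gcongr

/-- rescaling of the non-concentration property.  With
`A₁ = (z₁ - z₀)⁻¹((A - z₀) ∩ B(0,t₀))`, for all `δ/t₀ < t < 1` and `z ∈ ℂ`,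
`|A₁ ∩ B(z,t)| ≤ (2t)^{σ/2}|A₁|`. -/
theorem stmt7 (δ σ t₀ : ℝ) (A : Set ℂ) (z₀ z₁ : ℂ)
    (hδ : 0 < δ) (hσ : 0 < σ) (hfin : A.Finite)
    (hsep : A.Pairwise fun a b => δ < dist a b)
    (hz₀ : z₀ ∈ A) (hz₁ : z₁ ∈ A) (ht₀ : δ < t₀) (hdist : dist z₀ z₁ = t₀)
    (hlarge : t₀ ^ (σ / 2) * (A.ncard : ℝ) ≤ ((A ∩ Metric.closedBall z₀ t₀).ncard : ℝ))
    (hnc : ∀ (z : ℂ) (t : ℝ), δ < t → t ≤ t₀ →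
      ((A ∩ Metric.closedBall z t).ncard : ℝ) ≤ (2 * t) ^ (σ / 2) * (A.ncard : ℝ)) :
    ∀ (z : ℂ) (t : ℝ), δ / t₀ < t → t < 1 →
      ((((fun w => (z₁ - z₀)⁻¹ * (w - z₀)) '' (A ∩ Metric.closedBall z₀ t₀)) ∩
          Metric.closedBall z t).ncard : ℝ)
        ≤ (2 * t) ^ (σ / 2) *
          (((fun w => (z₁ - z₀)⁻¹ * (w - z₀)) '' (A ∩ Metric.closedBall z₀ t₀)).ncard : ℝ) :=
  stmt7_general δ σ t₀ A z₀ z₁ hδ hfin ht₀ hdist hlarge hnc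
end

section
/- Let g_1, ..., g_q ∈ U(d), q ≥ 2, generate a free group, and for ℓ ∈ ℕ, δ > 0 define W_{ℓ,δ} = {x ∈ W_ℓ : ‖x - 1‖ < δ}, where W_ℓ is the set of words of length ≤ ℓ. Assume |W_{ℓ/2}| ≥ c(2q-1)^{ℓ/2}. Then |W_{ℓ,δ}| ≳ δ^{2d²} (2q-1)^{ℓ/2}. -/
/-- The Frobenius (Hilbert–Schmidt) norm of a complex matrix. -/
noncomputable def matNorm {d : ℕ} (A : Matrix (Fin d) (Fin d) ℂ) : ℝ :=
  Real.sqrt (∑ i, ∑ j, ‖A i j‖ ^ 2)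

/-!
Cut the real and imaginary parts of every entry into intervals of length `δ / (2d)`. Unitary
matrices have entries of norm at most one, so they meet at most `(6d/δ)^{2d²}` such grid cells,
and by pigeonhole some cell contains a `(δ/6d)^{2d²}` fraction of `W_{ℓ/2}`; any two matrices in a
cell are within Frobenius distance `δ`. Left multiplication by `x₀⁻¹` for one `x₀` in the cell is
injective, keeps Frobenius distances (unitary invariance), and sends `y` to the word `x₀⁻¹ y` of
length at most `ℓ`, which is then `δ`-close to `1`.
-/

open Finset
open scoped Matrix

noncomputable section

section GridCells

variable {ε : ℝ}

def gridCell (ε : ℝ) (z : ℂ) : ℤ × ℤ := (⌊z.re / ε⌋, ⌊z.im / ε⌋)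

def gridRange (ε : ℝ) : Finset ℤ := Icc ⌊-1 / ε⌋ ⌊1 / ε⌋

lemma abs_sub_lt_of_floor_div_eq (hε : 0 < ε) {a b : ℝ} (h : ⌊a / ε⌋ = ⌊b / ε⌋) :
    |a - b| < ε := by
  have := Int.abs_sub_lt_one_of_floor_eq_floor h
  rwa [← sub_div, abs_div, abs_of_pos hε, div_lt_one hε] at this

lemma norm_sub_sq_le_of_gridCell_eq (hε : 0 < ε) {z w : ℂ} (h : gridCell ε z = gridCell ε w) :
    ‖z - w‖ ^ 2 ≤ 2 * ε ^ 2 := by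
  simp only [gridCell, Prod.mk.injEq] at h
  have hre := abs_lt.mp (abs_sub_lt_of_floor_div_eq hε h.1)
  have him := abs_lt.mp (abs_sub_lt_of_floor_div_eq hε h.2)
  rw [Complex.sq_norm, Complex.normSq_apply, Complex.sub_re, Complex.sub_im]
  nlinarith

lemma floor_div_mem_gridRange (hε : 0 < ε) {a : ℝ} (ha : |a| ≤ 1) :
    ⌊a / ε⌋ ∈ gridRange ε := by
  rw [gridRange, mem_Icc]
  exact ⟨Int.floor_mono (by gcongr; exact neg_le_of_abs_le ha),
    Int.floor_mono (by gcongr; exact le_of_abs_le ha)⟩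

lemma gridCell_mem (hε : 0 < ε) {z : ℂ} (hz : ‖z‖ ≤ 1) :
    gridCell ε z ∈ gridRange ε ×ˢ gridRange ε :=
  mem_product.mpr ⟨floor_div_mem_gridRange hε ((Complex.abs_re_le_norm z).trans hz),
    floor_div_mem_gridRange hε ((Complex.abs_im_le_norm z).trans hz)⟩

lemma card_gridRange_le (hε : 0 < ε) (hε' : ε ≤ 1 / 2) : (#(gridRange ε) : ℝ) ≤ 3 / ε := by
  have hle : ⌊-1 / ε⌋ ≤ ⌊1 / ε⌋ + 1 := by
    have : (-1 : ℝ) / ε ≤ 1 / ε := by gcongr; norm_num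
    have := Int.floor_mono this
    omega
  rw [gridRange, Int.card_Icc, ← Int.cast_natCast, Int.toNat_of_nonneg (by omega)]
  push_cast
  have h1 := Int.floor_le (1 / ε)
  have h2 := Int.sub_one_lt_floor (-1 / ε)
  have h3 : 2 ≤ 1 / ε := by rw [le_div_iff₀ hε]; linarith
  have h4 : (-1 : ℝ) / ε = -(1 / ε) := by ring
  have h5 : (3 : ℝ) / ε = 3 * (1 / ε) := by ring
  linarith

end GridCells

section MatrixGrid

variable {m n : Type*} [Fintype m] [Fintype n] {ε : ℝ}

def matrixGridCell (ε : ℝ) (A : Matrix m n ℂ) : m × n → ℤ × ℤ :=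
  fun p => gridCell ε (A p.1 p.2)

lemma matNorm_sq_eq_sum {d : ℕ} (A : Matrix (Fin d) (Fin d) ℂ) :
    matNorm A ^ 2 = ∑ i, ∑ j, ‖A i j‖ ^ 2 :=
  Real.sq_sqrt (by positivity)

lemma matNorm_sub_sq_le_of_matrixGridCell_eq (hε : 0 < ε) {d : ℕ}
    {A B : Matrix (Fin d) (Fin d) ℂ} (h : matrixGridCell ε A = matrixGridCell ε B) :
    matNorm (A - B) ^ 2 ≤ 2 * d ^ 2 * ε ^ 2 := by
  rw [matNorm_sq_eq_sum]
  calc ∑ i, ∑ j, ‖(A - B) i j‖ ^ 2 ≤ ∑ _i : Fin d, ∑ _j : Fin d, 2 * ε ^ 2 :=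
        sum_le_sum fun i _ => sum_le_sum fun j _ =>
          norm_sub_sq_le_of_gridCell_eq hε (congr_fun h (i, j))
    _ = 2 * d ^ 2 * ε ^ 2 := by
      simp only [sum_const, card_univ, Fintype.card_fin, nsmul_eq_mul]
      ring

lemma matrixGridCell_mem_of_mem_unitaryGroup [DecidableEq n] (hε : 0 < ε) {U : Matrix n n ℂ}
    (hU : U ∈ Matrix.unitaryGroup n ℂ) :
    matrixGridCell ε U ∈ Fintype.piFinset fun _ => gridRange ε ×ˢ gridRange ε :=
  Fintype.mem_piFinset.mpr fun p => gridCell_mem hε (entry_norm_bound_of_unitary hU p.1 p.2)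

lemma card_piFinset_gridRange_le [DecidableEq m] [DecidableEq n] (hε : 0 < ε) (hε' : ε ≤ 1 / 2) :
    (#(Fintype.piFinset fun _ : m × n => gridRange ε ×ˢ gridRange ε) : ℝ) ≤
      (3 / ε) ^ (2 * (Fintype.card m * Fintype.card n)) := by
  rw [Fintype.card_piFinset, prod_const, card_product, card_univ, Fintype.card_prod, ← sq,
    ← pow_mul]
  push_cast
  gcongr
  exact card_gridRange_le hε hε'

end MatrixGrid

lemma matNorm_eq_sqrt_re_trace {d : ℕ} (A : Matrix (Fin d) (Fin d) ℂ) :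
    matNorm A = √(Aᴴ * A).trace.re := by
  rw [matNorm, sum_comm]
  simp [Matrix.trace, Matrix.mul_apply, Complex.re_sum, Complex.sq_norm, Complex.normSq_apply]

lemma matNorm_unitary_mul {d : ℕ} {U : Matrix (Fin d) (Fin d) ℂ}
    (hU : U ∈ Matrix.unitaryGroup (Fin d) ℂ) (A : Matrix (Fin d) (Fin d) ℂ) :
    matNorm (U * A) = matNorm A := by
  have hUU : Uᴴ * U = 1 := hU.1
  rw [matNorm_eq_sqrt_re_trace, matNorm_eq_sqrt_re_trace, Matrix.conjTranspose_mul,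
    Matrix.mul_assoc, ← Matrix.mul_assoc Uᴴ, hUU, Matrix.one_mul]

lemma matNorm_inv_mul_sub_one {d : ℕ} (x y : Matrix.unitaryGroup (Fin d) ℂ) :
    matNorm (((x⁻¹ * y : Matrix.unitaryGroup (Fin d) ℂ) : Matrix (Fin d) (Fin d) ℂ) - 1) =
      matNorm ((y : Matrix (Fin d) (Fin d) ℂ) - (x : Matrix (Fin d) (Fin d) ℂ)) := by
  have hx : star (x : Matrix (Fin d) (Fin d) ℂ) * x = 1 := x.2.1
  rw [Submonoid.coe_mul, ← Unitary.star_eq_inv, Unitary.coe_star, ← hx, ← Matrix.mul_sub,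
    matNorm_unitary_mul (Unitary.star_mem x.2)]

end

lemma exists_large_subset_matNorm_sub_lt {d : ℕ} (hd : 1 ≤ d) {δ : ℝ} (hδ : 0 < δ)
    (hδ1 : δ ≤ 1) (F : Finset (Matrix.unitaryGroup (Fin d) ℂ)) :
    ∃ G ⊆ F, (#F : ℝ) ≤ (6 * d / δ) ^ (2 * d ^ 2) * #G ∧
      ∀ x ∈ G, ∀ y ∈ G,
        matNorm ((x : Matrix (Fin d) (Fin d) ℂ) - (y : Matrix (Fin d) (Fin d) ℂ)) < δ := by
  classical
  have hd1 : (1 : ℝ) ≤ d := by exact_mod_cast hd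
  set ε := δ / (2 * d) with hε_def
  have hε : 0 < ε := by positivity
  have hε' : ε ≤ 1 / 2 := by
    rw [div_le_iff₀ (by positivity)]
    linarith
  set P := Fintype.piFinset fun _ : Fin d × Fin d => gridRange ε ×ˢ gridRange ε
  have hP : (#P : ℝ) ≤ (6 * d / δ) ^ (2 * d ^ 2) := by
    convert card_piFinset_gridRange_le (m := Fin d) (n := Fin d) hε hε' using 2
    · rw [hε_def]; field_simp; ring
    · simp [sq]
  have hPne : P.Nonempty :=
    ⟨_, matrixGridCell_mem_of_mem_unitaryGroup hε (one_mem (Matrix.unitaryGroup (Fin d) ℂ))⟩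
  have hPpos : (0 : ℝ) < #P := by exact_mod_cast hPne.card_pos
  obtain ⟨p, -, hp⟩ := exists_le_card_fiber_of_nsmul_le_card_of_maps_to
    (f := fun x : Matrix.unitaryGroup (Fin d) ℂ => matrixGridCell ε (x : Matrix (Fin d) (Fin d) ℂ))
    (fun x _ => matrixGridCell_mem_of_mem_unitaryGroup hε x.2) hPne
    (b := (#F : ℝ) / #P) (by rw [nsmul_eq_mul, mul_div_cancel₀ _ hPpos.ne'])
  refine ⟨{x ∈ F | matrixGridCell ε (x : Matrix (Fin d) (Fin d) ℂ) = p}, filter_subset _ _, ?_, ?_⟩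
  · calc (#F : ℝ) = #P * (#F / #P) := (mul_div_cancel₀ _ hPpos.ne').symm
      _ ≤ _ := mul_le_mul hP hp (by positivity) (by positivity)
  · intro x hx y hy
    have hxy := (mem_filter.1 hx).2.trans (mem_filter.1 hy).2.symm
    refine lt_of_pow_lt_pow_left₀ 2 hδ.le ?_
    calc _ ≤ 2 * d ^ 2 * ε ^ 2 := matNorm_sub_sq_le_of_matrixGridCell_eq hε hxy
      _ = δ ^ 2 / 2 := by rw [hε_def]; field_simp
      _ < δ ^ 2 := by linarith [pow_pos hδ 2]

section Words

variable {G ι : Type*} [Group G] (g : ι → G)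

def wordsOfLength (ℓ : ℕ) : Set G :=
  {x | ∃ L : List (ι × Bool), L.length ≤ ℓ ∧ x = FreeGroup.lift g (FreeGroup.mk L)}

lemma wordsOfLength_finite [Finite ι] (ℓ : ℕ) : (wordsOfLength g ℓ).Finite := by
  convert (List.finite_length_le (ι × Bool) ℓ).image fun L => FreeGroup.lift g (FreeGroup.mk L)
  ext x
  simp [wordsOfLength, eq_comm]

lemma inv_mul_mem_wordsOfLength {a b ℓ : ℕ} (hab : a + b ≤ ℓ) {x y : G}
    (hx : x ∈ wordsOfLength g a) (hy : y ∈ wordsOfLength g b) :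
    x⁻¹ * y ∈ wordsOfLength g ℓ := by
  obtain ⟨L, hL, rfl⟩ := hx
  obtain ⟨M, hM, rfl⟩ := hy
  refine ⟨FreeGroup.invRev L ++ M, ?_, ?_⟩
  · rw [List.length_append, FreeGroup.invRev_length]
    omega
  · rw [← FreeGroup.mul_mk, ← FreeGroup.inv_mk, map_mul, map_inv]

end Words

lemma card_le_ncard_wordsOfLength_matNorm_sub_one_lt {ι : Type*} [Finite ι] {d : ℕ}
    (g : ι → Matrix.unitaryGroup (Fin d) ℂ) {k ℓ : ℕ} (hkℓ : k + k ≤ ℓ) {δ : ℝ}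
    {S : Finset (Matrix.unitaryGroup (Fin d) ℂ)} (hS : ↑S ⊆ wordsOfLength g k)
    (hclose : ∀ x ∈ S, ∀ y ∈ S,
      matNorm ((x : Matrix (Fin d) (Fin d) ℂ) - (y : Matrix (Fin d) (Fin d) ℂ)) < δ) :
    #S ≤ {x ∈ wordsOfLength g ℓ | matNorm ((x : Matrix (Fin d) (Fin d) ℂ) - 1) < δ}.ncard := by
  classical
  obtain rfl | ⟨x₀, hx₀⟩ := S.eq_empty_or_nonempty
  · simp
  have hsub : ↑(S.image (x₀⁻¹ * ·)) ⊆
      {x ∈ wordsOfLength g ℓ | matNorm ((x : Matrix (Fin d) (Fin d) ℂ) - 1) < δ} := by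
    intro x hx
    obtain ⟨y, hy, rfl⟩ := mem_image.1 hx
    exact ⟨inv_mul_mem_wordsOfLength g hkℓ (hS hx₀) (hS hy),
      (matNorm_inv_mul_sub_one x₀ y).trans_lt (hclose y hy x₀ hx₀)⟩
  calc #S = #(S.image (x₀⁻¹ * ·)) := (card_image_of_injective _ (mul_right_injective _)).symm
    _ = (↑(S.image (x₀⁻¹ * ·)) : Set _).ncard := (Set.ncard_coe_finset _).symm
    _ ≤ _ := Set.ncard_le_ncard hsub ((wordsOfLength_finite g ℓ).subset (Set.sep_subset _ _))

theorem stmt14_general (d q : ℕ) (hd : 1 ≤ d)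
    (g : Fin q → Matrix.unitaryGroup (Fin d) ℂ)
    (W : ℕ → Set (Matrix.unitaryGroup (Fin d) ℂ))
    (hW : ∀ ℓ, W ℓ = {x | ∃ L : List (Fin q × Bool),
      L.length ≤ ℓ ∧ x = FreeGroup.lift g (FreeGroup.mk L)})
    (c : ℝ) (hc : 0 < c) :
    ∃ c' : ℝ, 0 < c' ∧ ∀ (ℓ : ℕ) (δ : ℝ), 0 < δ → δ ≤ 1 →
      c * ((2 * q - 1 : ℝ)) ^ ((ℓ : ℝ) / 2) ≤ ((W (ℓ / 2)).ncard : ℝ) →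
      c' * δ ^ (2 * d ^ 2) * ((2 * q - 1 : ℝ)) ^ ((ℓ : ℝ) / 2) ≤
        (({x ∈ W ℓ | matNorm ((x : Matrix (Fin d) (Fin d) ℂ) - 1) < δ}).ncard : ℝ) := by
  obtain rfl : W = wordsOfLength g := funext hW
  have hd0 : (0 : ℝ) < d := by exact_mod_cast hd
  refine ⟨c / (6 * d) ^ (2 * d ^ 2), by positivity, fun ℓ δ hδ hδ1 hcard => ?_⟩
  set n := 2 * d ^ 2
  set R := (2 * q - 1 : ℝ) ^ ((ℓ : ℝ) / 2)
  set F := (wordsOfLength_finite g (ℓ / 2)).toFinset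
  rw [Set.ncard_eq_toFinset_card _ (wordsOfLength_finite g (ℓ / 2))] at hcard
  obtain ⟨S, hSF, hFS, hS⟩ := exists_large_subset_matNorm_sub_lt hd hδ hδ1 F
  have hST := card_le_ncard_wordsOfLength_matNorm_sub_one_lt g (by omega : ℓ / 2 + ℓ / 2 ≤ ℓ)
    (fun x hx => (Set.Finite.mem_toFinset _).1 (hSF hx)) hS
  calc c / (6 * d) ^ n * δ ^ n * R = (δ / (6 * d)) ^ n * (c * R) := by rw [div_pow]; ring
    _ ≤ (δ / (6 * d)) ^ n * ((6 * d / δ) ^ n * #S) :=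
        mul_le_mul_of_nonneg_left (hcard.trans hFS) (by positivity)
    _ = #S := by
        rw [← mul_assoc, ← mul_pow, div_mul_div_cancel₀ (by positivity), div_self hδ.ne', one_pow,
          one_mul]
    _ ≤ _ := by exact_mod_cast hST

/-- for `g₁, ..., g_q ∈ U(d)` (q ≥ 2) generating a free group, with
`W_ℓ` the words of length `≤ ℓ` and `W_{ℓ,δ} = {x ∈ W_ℓ : ‖x - 1‖ < δ}`, if
`|W_{ℓ/2}| ≥ c (2q-1)^{ℓ/2}`, then `|W_{ℓ,δ}| ≳ δ^{2d²} (2q-1)^{ℓ/2}`. -/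
theorem stmt14 (d q : ℕ) (hd : 1 ≤ d) (hq : 2 ≤ q)
    (g : Fin q → Matrix.unitaryGroup (Fin d) ℂ)
    (hfree : Function.Injective (FreeGroup.lift g))
    (W : ℕ → Set (Matrix.unitaryGroup (Fin d) ℂ))
    (hW : ∀ ℓ, W ℓ = {x | ∃ L : List (Fin q × Bool),
      L.length ≤ ℓ ∧ x = FreeGroup.lift g (FreeGroup.mk L)})
    (c : ℝ) (hc : 0 < c) :
    ∃ c' : ℝ, 0 < c' ∧ ∀ (ℓ : ℕ) (δ : ℝ), 0 < δ → δ ≤ 1 →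
      c * ((2 * q - 1 : ℝ)) ^ ((ℓ : ℝ) / 2) ≤ ((W (ℓ / 2)).ncard : ℝ) →
      c' * δ ^ (2 * d ^ 2) * ((2 * q - 1 : ℝ)) ^ ((ℓ : ℝ) / 2) ≤
        (({x ∈ W ℓ | matNorm ((x : Matrix (Fin d) (Fin d) ℂ) - 1) < δ}).ncard : ℝ) :=
  stmt14_general d q hd g W hW c hc
end

section
/- Let x ∈ SU(d) with |x_{ii}| entries of a matrix x' = ∑_i x_{ii} e_i ⊗ e_i (the diagonal part of x) satisfying ‖x - x'‖ ≲ δ₁. Then |1 - ∏_i |x_{ii}|| ≲ δ₁ and |1 - |x_{ii}|| ≲ δ₁ for each 1 ≤ i ≤ d. -/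
open Finset Matrix

theorem Matrix.sum_norm_sq_row_of_mem_unitaryGroup {𝕜 n : Type*} [RCLike 𝕜] [Fintype n]
    [DecidableEq n] {U : Matrix n n 𝕜} (hU : U ∈ unitaryGroup n 𝕜) (i : n) :
    ∑ j, ‖U i j‖ ^ 2 = 1 := by
  have hUU : U * Uᴴ = 1 := mem_unitaryGroup_iff.mp hU
  have h : (U * Uᴴ) i i = ((∑ j, ‖U i j‖ ^ 2 : ℝ) : 𝕜) := by
    simp only [mul_apply, conjTranspose_apply, ← starRingEnd_apply, RCLike.mul_conj]
    norm_cast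
  rw [hUU, one_apply_eq] at h
  exact_mod_cast h.symm

theorem Finset.one_sub_prod_le_sum_one_sub {ι R : Type*} [CommRing R] [PartialOrder R]
    [IsOrderedRing R] (s : Finset ι) {a : ι → R} (h0 : ∀ i ∈ s, 0 ≤ a i)
    (h1 : ∀ i ∈ s, a i ≤ 1) : 1 - ∏ i ∈ s, a i ≤ ∑ i ∈ s, (1 - a i) := by
  induction s using Finset.cons_induction with
  | empty => simp
  | cons i s hi ih =>
    rw [prod_cons, sum_cons]
    have hprod : ∏ j ∈ s, a j ≤ 1 :=
      prod_le_one (fun j hj => h0 j (mem_cons_of_mem hj)) (fun j hj => h1 j (mem_cons_of_mem hj))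
    have hs := ih (fun j hj => h0 j (mem_cons_of_mem hj)) (fun j hj => h1 j (mem_cons_of_mem hj))
    -- `1 - a P = (1 - a) + a (1 - P)` and `a (1 - P) ≤ 1 - P`
    have key : a i * (1 - ∏ j ∈ s, a j) ≤ 1 - ∏ j ∈ s, a j :=
      mul_le_of_le_one_left (sub_nonneg.2 hprod) (h1 i (mem_cons_self i s))
    linear_combination key + hs

theorem Matrix.sum_erase_norm_sq_le_sum_norm_sq_sub_diagonal {n R : Type*} [Fintype n]
    [DecidableEq n] [SeminormedAddCommGroup R] (A : Matrix n n R) (i : n) :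
    ∑ j ∈ univ.erase i, ‖A i j‖ ^ 2 ≤ ∑ k, ∑ j, ‖(A - diagonal fun k => A k k) k j‖ ^ 2 := by
  calc ∑ j ∈ univ.erase i, ‖A i j‖ ^ 2
      = ∑ j ∈ univ.erase i, ‖(A - diagonal fun k => A k k) i j‖ ^ 2 :=
        sum_congr rfl fun j hj => by
          rw [Matrix.sub_apply, diagonal_apply_ne _ (ne_of_mem_erase hj).symm, sub_zero]
    _ ≤ ∑ j, ‖(A - diagonal fun k => A k k) i j‖ ^ 2 :=
        sum_le_sum_of_subset_of_nonneg (erase_subset _ _) fun _ _ _ => sq_nonneg _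
    _ ≤ ∑ k, ∑ j, ‖(A - diagonal fun k => A k k) k j‖ ^ 2 :=
        single_le_sum (f := fun k => ∑ j, ‖(A - diagonal fun k => A k k) k j‖ ^ 2)
          (fun _ _ => sum_nonneg fun _ _ => sq_nonneg _) (mem_univ i)

theorem one_sub_norm_diag_le_matNorm {d : ℕ} {U : Matrix (Fin d) (Fin d) ℂ}
    (hU : U ∈ unitaryGroup (Fin d) ℂ) (i : Fin d) :
    1 - ‖U i i‖ ≤ matNorm (U - diagonal fun k => U k k) := by
  have h1 : ‖U i i‖ ≤ 1 := entry_norm_bound_of_unitary hU i i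
  have hrow : 1 - ‖U i i‖ ^ 2 = ∑ j ∈ univ.erase i, ‖U i j‖ ^ 2 := by
    rw [← sum_norm_sq_row_of_mem_unitaryGroup hU i, ← sum_erase_add _ _ (mem_univ i),
      add_sub_cancel_right]
  refine (Real.le_sqrt (sub_nonneg.2 h1) (sum_nonneg fun _ _ => sum_nonneg fun _ _ =>
    sq_nonneg _)).2 ?_
  calc (1 - ‖U i i‖) ^ 2 ≤ 1 - ‖U i i‖ ^ 2 := by nlinarith [norm_nonneg (U i i)]
    _ ≤ _ := hrow ▸ sum_erase_norm_sq_le_sum_norm_sq_sub_diagonal U i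

theorem stmt16_general (d : ℕ) :
    ∃ C : ℝ, 0 < C ∧
      ∀ (x : Matrix.specialUnitaryGroup (Fin d) ℂ) (δ₁ : ℝ), 0 < δ₁ →
        matNorm ((x : Matrix (Fin d) (Fin d) ℂ) -
          Matrix.diagonal (fun i => (x : Matrix (Fin d) (Fin d) ℂ) i i)) ≤ δ₁ →
        (|1 - ∏ i, ‖(x : Matrix (Fin d) (Fin d) ℂ) i i‖| ≤ C * δ₁ ∧
         ∀ i, |1 - ‖(x : Matrix (Fin d) (Fin d) ℂ) i i‖| ≤ C * δ₁) := by
  refine ⟨d + 1, by positivity, fun x δ₁ hδ₁ hx => ?_⟩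
  have hU : (x : Matrix (Fin d) (Fin d) ℂ) ∈ unitaryGroup (Fin d) ℂ :=
    (mem_specialUnitaryGroup_iff.mp x.2).1
  have h0 (i : Fin d) : 0 ≤ ‖(x : Matrix (Fin d) (Fin d) ℂ) i i‖ := norm_nonneg _
  have h1 (i : Fin d) := entry_norm_bound_of_unitary hU i i
  have hdiag (i : Fin d) := (one_sub_norm_diag_le_matNorm hU i).trans hx
  have hδ_le : δ₁ ≤ (d + 1) * δ₁ := le_mul_of_one_le_left hδ₁.le (by simp)
  refine ⟨?_, fun i => ?_⟩
  · rw [abs_of_nonneg (sub_nonneg.2 (prod_le_one (fun i _ => h0 i) fun i _ => h1 i))]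
    calc 1 - ∏ i, ‖(x : Matrix (Fin d) (Fin d) ℂ) i i‖
        ≤ ∑ i, (1 - ‖(x : Matrix (Fin d) (Fin d) ℂ) i i‖) :=
          one_sub_prod_le_sum_one_sub _ (fun i _ => h0 i) fun i _ => h1 i
      _ ≤ ∑ _ : Fin d, δ₁ := sum_le_sum fun i _ => hdiag i
      _ = d * δ₁ := by simp
      _ ≤ (d + 1) * δ₁ := by linarith
  · rw [abs_of_nonneg (sub_nonneg.2 (h1 i))]
    exact (hdiag i).trans hδ_le

/-- for `x ∈ SU(d)` with `x'` its diagonal part and `‖x - x'‖ ≲ δ₁`,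
one has `|1 - ∏_i |x_{ii}|| ≲ δ₁` and `|1 - |x_{ii}|| ≲ δ₁` for each `i`. -/
theorem stmt16 (d : ℕ) (hd : 1 ≤ d) :
    ∃ C : ℝ, 0 < C ∧
      ∀ (x : Matrix.specialUnitaryGroup (Fin d) ℂ) (δ₁ : ℝ), 0 < δ₁ →
        matNorm ((x : Matrix (Fin d) (Fin d) ℂ) -
          Matrix.diagonal (fun i => (x : Matrix (Fin d) (Fin d) ℂ) i i)) ≤ δ₁ →
        (|1 - ∏ i, ‖(x : Matrix (Fin d) (Fin d) ℂ) i i‖| ≤ C * δ₁ ∧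
         ∀ i, |1 - ‖(x : Matrix (Fin d) (Fin d) ℂ) i i‖| ≤ C * δ₁) :=
  stmt16_general d
end

section
/- Let η ∈ Mat_{d×d}(ℂ) with 1 + η ∈ SU(d) and ‖η‖ < δ < 1/2. Then ‖η + η*‖ = O(‖η‖²) and |Tr η| = O(‖η‖²); consequently there exists a ∈ su(d) (anti-Hermitian, trace zero) with ‖η - a‖ ≲ ‖η‖². -/
/-!
Unitarity of `1 + η` gives `η + ηᴴ = -ηᴴη`, hence `‖η + ηᴴ‖ ≤ ‖η‖²`. In the Leibniz expansion
of `det (1 + η)`, the identity permutation contributes `∏ᵢ (1 + ηᵢᵢ) = 1 + tr η + O(‖η‖²)`, and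
every other permutation moves at least two indices, so its term contains two off-diagonal entries
and is `O(‖η‖²)`; since `det (1 + η) = 1`, this bounds `tr η`. Finally, the traceless part of the
anti-Hermitian part `(η - ηᴴ)/2` lies in `su(d)` and differs from `η` by `(η + ηᴴ)/2` plus a
multiple of the identity whose norm is at most `|tr η|`.
-/

open scoped Matrix

attribute [local instance] Matrix.frobeniusNormedAddCommGroup Matrix.frobeniusNormedRing
  Matrix.frobeniusNormSMulClass

open Finset

section NormedCommRing

variable {R ι : Type*} [NormedCommRing R] [NormOneClass R] {ε : ℝ}

theorem Finset.norm_prod_one_add_sub_one_sub_sum_le (s : Finset ι) {x : ι → R} (hε : ε ≤ 1)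
    (hx : ∀ i ∈ s, ‖x i‖ ≤ ε) :
    ‖∏ i ∈ s, (1 + x i) - 1 - ∑ i ∈ s, x i‖ ≤ (2 ^ #s - 1 - #s) * ε ^ 2 := by
  -- The constant is `(1 + ε) ^ #s - 1 - #s * ε` at `ε = 1`; the induction needs it this sharp.
  classical
  induction s using Finset.induction_on with
  | empty => simp
  | insert a s ha ih =>
    have hxs : ∀ i ∈ s, ‖x i‖ ≤ ε := fun i hi ↦ hx i (mem_insert_of_mem hi)
    have hxa : ‖x a‖ ≤ ε := hx a (mem_insert_self a s)
    have hε0 : 0 ≤ ε := (norm_nonneg _).trans hxa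
    have hsum : ‖∑ i ∈ s, x i‖ ≤ #s * ε := by
      simpa using norm_sum_le_of_le s hxs
    have hone : ‖1 + x a‖ ≤ 2 := by
      grw [norm_add_le, norm_one, hxa, hε]; norm_num
    rw [prod_insert ha, sum_insert ha, card_insert_of_notMem ha, pow_succ, Nat.cast_succ,
      show (1 + x a) * ∏ i ∈ s, (1 + x i) - 1 - (x a + ∑ i ∈ s, x i) =
        (1 + x a) * (∏ i ∈ s, (1 + x i) - 1 - ∑ i ∈ s, x i) + x a * ∑ i ∈ s, x i by ring]
    grw [norm_add_le, norm_mul_le, norm_mul_le, hone, ih hxs, hxa, hsum]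
    nlinarith

theorem Matrix.norm_prod_perm_apply_le_of_ne_one {n : Type*} [Fintype n] [DecidableEq n]
    (A : Matrix n n R) (hε : ε ≤ 1) (hdiag : ∀ i, ‖A i i‖ ≤ 2) (hoff : ∀ i j, i ≠ j → ‖A i j‖ ≤ ε)
    {σ : Equiv.Perm n} (hσ : σ ≠ 1) :
    ‖∏ i, A (σ i) i‖ ≤ 2 ^ Fintype.card n * ε ^ 2 := by
  have hε0 : 0 ≤ ε := by
    obtain ⟨i, hi⟩ := not_forall.mp (mt Equiv.ext hσ)
    exact (norm_nonneg _).trans (hoff _ _ hi)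
  calc ‖∏ i, A (σ i) i‖ ≤ ∏ i, if σ i = i then (2 : ℝ) else ε := by
        refine (Finset.norm_prod_le _ _).trans (prod_le_prod (fun _ _ ↦ norm_nonneg _) fun i _ ↦ ?_)
        split_ifs with h
        · simpa [h] using hdiag i
        · exact hoff _ _ h
    _ = 2 ^ #{i | σ i = i} * ε ^ #σ.support := by
        rw [prod_ite, prod_const, prod_const]; rfl
    _ ≤ 2 ^ Fintype.card n * ε ^ 2 := by
        have hsupp := Equiv.Perm.two_le_card_support_of_ne_one hσ
        exact mul_le_mul (pow_le_pow_right₀ one_le_two (card_filter_le _ _))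
          (pow_le_pow_of_le_one hε0 hε hsupp) (by positivity) (by positivity)

theorem Matrix.norm_det_one_add_sub_one_sub_trace_le {n : Type*} [Fintype n] [DecidableEq n]
    (η : Matrix n n R) (hε : ε ≤ 1) (hη : ∀ i j, ‖η i j‖ ≤ ε) :
    ‖(1 + η).det - 1 - η.trace‖ ≤ (Fintype.card n).factorial * 2 ^ Fintype.card n * ε ^ 2 := by
  have hterm : ∀ σ : Equiv.Perm n,
      ‖Equiv.Perm.sign σ • ∏ i, (1 + η) (σ i) i - if σ = 1 then 1 + η.trace else 0‖ ≤
        2 ^ Fintype.card n * ε ^ 2 := by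
    intro σ
    by_cases hσ : σ = 1
    · subst hσ
      have := Finset.univ.norm_prod_one_add_sub_one_sub_sum_le hε (fun i _ ↦ hη i i)
      simp only [Equiv.Perm.sign_one, one_smul, Equiv.Perm.one_apply, if_true, Matrix.add_apply,
        Matrix.one_apply_eq, Matrix.trace, Matrix.diag, ← sub_sub, card_univ] at this ⊢
      refine this.trans (mul_le_mul_of_nonneg_right ?_ (sq_nonneg ε))
      linarith [(Nat.cast_nonneg (Fintype.card n) : (0 : ℝ) ≤ _)]
    · rw [if_neg hσ, sub_zero, norm_units_zsmul]
      refine (1 + η).norm_prod_perm_apply_le_of_ne_one hε (fun i ↦ ?_) (fun i j hij ↦ ?_) hσ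
      · grw [Matrix.add_apply, Matrix.one_apply_eq, norm_add_le, norm_one, hη, hε]; norm_num
      · simpa [Matrix.one_apply_ne hij] using hη i j
  -- Compare the Leibniz expansion termwise with `1 + tr η`, placed at `σ = 1`.
  rw [sub_sub, Matrix.det_apply, ← Fintype.sum_ite_eq' (1 : Equiv.Perm n) fun _ ↦ 1 + η.trace,
    ← sum_sub_distrib]
  grw [norm_sum_le_of_le _ fun σ _ ↦ hterm σ]
  rw [sum_const, card_univ, Fintype.card_perm, nsmul_eq_mul, mul_assoc]

end NormedCommRing

theorem add_star_eq_neg_star_mul_of_one_add_mem_unitary {R : Type*} [Ring R] [StarRing R] {x : R}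
    (hx : 1 + x ∈ unitary R) : x + star x = -(star x * x) := by
  have h := Unitary.star_mul_self_of_mem hx
  rw [star_add, star_one, show (1 + star x) * (1 + x) = 1 + (x + star x + star x * x) by
    noncomm_ring, add_eq_left] at h
  exact eq_neg_of_add_eq_zero_left h

theorem norm_add_star_le_sq_of_one_add_mem_unitary {R : Type*} [NormedRing R] [StarRing R]
    [NormedStarGroup R] {x : R} (hx : 1 + x ∈ unitary R) : ‖x + star x‖ ≤ ‖x‖ ^ 2 := by
  rw [add_star_eq_neg_star_mul_of_one_add_mem_unitary hx, norm_neg, sq]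
  exact (norm_mul_le _ _).trans_eq (by rw [norm_star])

section Frobenius

variable {n : Type*} [Fintype n]

theorem Matrix.norm_entry_le_frobenius_norm {m α : Type*} [Fintype m] [NormedAddCommGroup α]
    (A : Matrix m n α) (i : m) (j : n) : ‖A i j‖ ≤ ‖A‖ :=
  (PiLp.norm_apply_le (WithLp.toLp 2 (A i)) j).trans
    (PiLp.norm_apply_le (WithLp.toLp 2 fun i ↦ WithLp.toLp 2 (A i)) i)

theorem matNorm_eq_frobenius_norm {d : ℕ} (A : Matrix (Fin d) (Fin d) ℂ) : matNorm A = ‖A‖ := by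
  rw [Matrix.frobenius_norm_def, matNorm, Real.sqrt_eq_rpow]
  norm_num [Real.rpow_natCast]

theorem Matrix.trace_sub_trace_div_card_smul_one {K : Type*} [Field K] [CharZero K] [DecidableEq n]
    (A : Matrix n n K) : (A - (A.trace / Fintype.card n) • 1).trace = 0 := by
  rw [trace_sub, trace_smul, trace_one, smul_eq_mul, div_mul_cancel_of_imp, sub_self]
  intro h
  rw [Nat.cast_eq_zero, Fintype.card_eq_zero_iff] at h
  simp [Matrix.trace]

variable {𝕜 : Type*} [RCLike 𝕜] [DecidableEq n]

theorem Matrix.conjTranspose_sub_trace_div_card_smul_one {A : Matrix n n 𝕜} (hA : Aᴴ = -A) :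
    (A - (A.trace / Fintype.card n) • 1)ᴴ = -(A - (A.trace / Fintype.card n) • 1) := by
  have htr : star A.trace = -A.trace := by rw [← trace_conjTranspose, hA, trace_neg]
  rw [conjTranspose_sub, conjTranspose_smul, conjTranspose_one, hA, star_div₀, htr,
    star_natCast, neg_div, neg_smul, neg_sub, sub_neg_eq_add, neg_add_eq_sub]

theorem Matrix.frobenius_norm_div_card_smul_one_le (c : 𝕜) :
    ‖(c / Fintype.card n) • (1 : Matrix n n 𝕜)‖ ≤ ‖c‖ := by
  have hone : ‖(1 : Matrix n n 𝕜)‖ = √(Fintype.card n) := by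
    simpa using congrArg NNReal.toReal (frobenius_nnnorm_one (n := n) (α := 𝕜))
  rw [norm_smul, hone, norm_div, RCLike.norm_natCast, div_mul_eq_mul_div, mul_div_assoc]
  refine mul_le_of_le_one_right (norm_nonneg c) (div_le_one_of_le₀ ?_ (Nat.cast_nonneg _))
  rcases (Fintype.card n).eq_zero_or_pos with h | h
  · simp [h]
  · exact Real.sqrt_le_self_iff.mpr (Or.inr (Nat.one_le_cast.mpr h))

theorem Matrix.exists_conjTranspose_eq_neg_trace_eq_zero_norm_sub_le (η : Matrix n n 𝕜) :
    ∃ a : Matrix n n 𝕜, aᴴ = -a ∧ a.trace = 0 ∧ ‖η - a‖ ≤ ‖η + ηᴴ‖ / 2 + ‖η.trace‖ := by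
  set A := (2⁻¹ : 𝕜) • (η - ηᴴ)
  have hA : Aᴴ = -A := by
    simp only [A, conjTranspose_smul, conjTranspose_sub, conjTranspose_conjTranspose, star_inv₀,
      star_ofNat, ← smul_neg, neg_sub]
  have hAtr : ‖A.trace‖ ≤ ‖η.trace‖ := by
    rw [trace_smul, trace_sub, trace_conjTranspose, norm_smul, norm_inv, RCLike.norm_ofNat]
    grw [norm_sub_le, norm_star]
    linarith
  refine ⟨A - (A.trace / Fintype.card n) • 1, conjTranspose_sub_trace_div_card_smul_one hA,
    A.trace_sub_trace_div_card_smul_one, ?_⟩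
  rw [show η - (A - (A.trace / Fintype.card n) • 1) =
      (2⁻¹ : 𝕜) • (η + ηᴴ) + (A.trace / Fintype.card n) • 1 by module]
  grw [norm_add_le, norm_smul, frobenius_norm_div_card_smul_one_le, hAtr, norm_inv,
    RCLike.norm_ofNat]
  linarith

end Frobenius

theorem stmt17_general (d : ℕ) :
    ∃ C : ℝ, 0 < C ∧
      ∀ (η : Matrix (Fin d) (Fin d) ℂ) (δ : ℝ),
        (1 + η) ∈ Matrix.specialUnitaryGroup (Fin d) ℂ →
        matNorm η < δ → δ < 1 / 2 →
        (matNorm (η + ηᴴ) ≤ C * matNorm η ^ 2 ∧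
         ‖η.trace‖ ≤ C * matNorm η ^ 2 ∧
         ∃ a : Matrix (Fin d) (Fin d) ℂ, aᴴ = -a ∧ a.trace = 0 ∧
           matNorm (η - a) ≤ C * matNorm η ^ 2) := by
  refine ⟨d.factorial * 2 ^ d + 1, by positivity, fun η δ hη hδη hδ ↦ ?_⟩
  obtain ⟨hunit, hdet⟩ := Matrix.mem_specialUnitaryGroup_iff.mp hη
  simp only [matNorm_eq_frobenius_norm] at hδη ⊢
  have hskew : ‖η + ηᴴ‖ ≤ ‖η‖ ^ 2 := norm_add_star_le_sq_of_one_add_mem_unitary hunit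
  have htrace : ‖η.trace‖ ≤ d.factorial * 2 ^ d * ‖η‖ ^ 2 := by
    simpa [hdet] using η.norm_det_one_add_sub_one_sub_trace_le (by linarith)
      (η.norm_entry_le_frobenius_norm)
  obtain ⟨a, ha, hatr, hηa⟩ := η.exists_conjTranspose_eq_neg_trace_eq_zero_norm_sub_le
  have hsq : 0 ≤ ‖η‖ ^ 2 := sq_nonneg _
  have hK : 0 ≤ (d.factorial * 2 ^ d : ℝ) * ‖η‖ ^ 2 := by positivity
  exact ⟨by linarith, by linarith, a, ha, hatr, by linarith⟩

/-- if `1 + η ∈ SU(d)` and `‖η‖ < δ < 1/2`, then `‖η + η*‖ = O(‖η‖²)` and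
`|Tr η| = O(‖η‖²)`; consequently there is `a ∈ su(d)` (anti-Hermitian, trace zero) with
`‖η - a‖ ≲ ‖η‖²`. -/
theorem stmt17 (d : ℕ) (hd : 1 ≤ d) :
    ∃ C : ℝ, 0 < C ∧
      ∀ (η : Matrix (Fin d) (Fin d) ℂ) (δ : ℝ),
        (1 + η) ∈ Matrix.specialUnitaryGroup (Fin d) ℂ →
        matNorm η < δ → δ < 1 / 2 →
        (matNorm (η + ηᴴ) ≤ C * matNorm η ^ 2 ∧
         ‖η.trace‖ ≤ C * matNorm η ^ 2 ∧
         ∃ a : Matrix (Fin d) (Fin d) ℂ, aᴴ = -a ∧ a.trace = 0 ∧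
           matNorm (η - a) ≤ C * matNorm η ^ 2) :=
  stmt17_general d
end

section
/- Let d ≥ 3 and let L ⊆ Mat_{d×d}(ℂ) be a subspace such that for every nonzero x ∈ ℂ^d there exists a nonzero x' with ⟨x, x'⟩ = 0 and x ⊗ x' ∈ L, where moreover the assignment can be chosen continuously on some open set O ⊆ ℂ^d (as a continuous map φ: O → ℂ^d \ {0} with ⟨x, φ(x)⟩ = 0 and x ⊗ φ(x) ∈ L). If additionally the image of φ spans a 2-dimensional complex subspace [e₁, e₂] (so φ(x) is parallel to -x̄₂ e₁ + x̄₁ e₂ for x = x₁e₁ + x₂e₂ + x₃e₃ when d = 3), then dim L ≥ 5. -/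
/-!
Writing `Q x = x ⊗ (-x̄₂ e₁ + x̄₁ e₂)`, the hypotheses put `Q x ∈ L` for all `x` in the open
set `O`. Since `Q` is a real quadratic form, `Q (p + t u) + Q (p - t u) = 2 Q p + 2 t² Q u`, so
this spreads from a neighbourhood of one point to all of `ℂ³`. Evaluating `Q` at `e₁`, `e₂`,
`e₁ + e₃`, `e₂ + e₃`, `e₁ + e₂` gives five linearly independent elements of `L`.
-/

open Matrix Filter Topology

theorem Submodule.mem_of_parallelogram_of_isOpen {E M : Type*} [AddCommGroup E] [Module ℝ E]
    [TopologicalSpace E] [IsTopologicalAddGroup E] [ContinuousSMul ℝ E]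
    [AddCommGroup M] [Module ℝ M] (S : Submodule ℝ M) (Q : E → M)
    (hQ : ∀ p u : E, ∀ t : ℝ,
      Q (p + t • u) + Q (p - t • u) = (2 : ℝ) • Q p + (2 * t ^ 2) • Q u)
    {O : Set E} (hO : IsOpen O) {p : E} (hp : p ∈ O) (hOS : ∀ x ∈ O, Q x ∈ S) (u : E) :
    Q u ∈ S := by
  have hline : ∀ᶠ t : ℝ in 𝓝 0, p + t • u ∈ O ∧ p - t • u ∈ O := by
    have hcontAdd : ContinuousAt (fun t : ℝ => p + t • u) 0 := by fun_prop
    have hcontSub : ContinuousAt (fun t : ℝ => p - t • u) 0 := by fun_prop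
    exact (hcontAdd.eventually_mem (by simpa using hO.mem_nhds hp)).and
      (hcontSub.eventually_mem (by simpa using hO.mem_nhds hp))
  obtain ⟨t, ⟨hplus, hminus⟩, ht⟩ :=
    ((hline.filter_mono nhdsWithin_le_nhds).and
      (self_mem_nhdsWithin : ∀ᶠ t in 𝓝[≠] (0 : ℝ), t ≠ 0)).exists
  have hsum : (2 * t ^ 2) • Q u ∈ S := by
    have := S.sub_mem (S.add_mem (hOS _ hplus) (hOS _ hminus)) (S.smul_mem (2 : ℝ) (hOS p hp))
    rwa [hQ, add_sub_cancel_left] at this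
  exact (S.smul_mem_iff (by simpa using ht)).mp hsum

noncomputable def planePerp (x : Fin 3 → ℂ) : Fin 3 → ℂ :=
  ![-(starRingEnd ℂ (x 1)), starRingEnd ℂ (x 0), 0]

theorem vecMulVec_planePerp_parallelogram (p u : Fin 3 → ℂ) (t : ℝ) :
    vecMulVec (p + t • u) (planePerp (p + t • u)) +
        vecMulVec (p - t • u) (planePerp (p - t • u)) =
      (2 : ℝ) • vecMulVec p (planePerp p) + (2 * t ^ 2) • vecMulVec u (planePerp u) := by
  ext a b
  fin_cases b <;>
    simp [planePerp, Complex.real_smul, Complex.conj_ofReal] <;> ring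

noncomputable def planePerpTestMatrices : Fin 5 → Matrix (Fin 3) (Fin 3) ℂ :=
  fun i => vecMulVec (v i) (planePerp (v i))
where
  v : Fin 5 → Fin 3 → ℂ := ![![1, 0, 0], ![0, 1, 0], ![1, 0, 1], ![0, 1, 1], ![1, 1, 0]]

theorem linearIndependent_planePerpTestMatrices :
    LinearIndependent ℂ planePerpTestMatrices := by
  rw [Fintype.linearIndependent_iff]
  intro g hg
  have entry (a b : Fin 3) := congrFun (congrFun hg a) b
  have e00 := entry 0 0
  have e01 := entry 0 1
  have e10 := entry 1 0
  have e20 := entry 2 0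
  have e21 := entry 2 1
  simp [Fin.sum_univ_five, planePerpTestMatrices, planePerpTestMatrices.v, planePerp]
    at e00 e01 e10 e20 e21
  intro i
  fin_cases i
  · show g 0 = 0
    linear_combination e01 - e21 - e00
  · show g 1 = 0
    linear_combination -e10 - e20 - e00
  · exact e21
  · exact e20
  · exact e00

theorem vecMulVec_planePerp_mem {L : Submodule ℂ (Matrix (Fin 3) (Fin 3) ℂ)}
    {x y : Fin 3 → ℂ} (hy : y ≠ 0) (hL : vecMulVec x y ∈ L)
    (hpar : ∃ c : ℂ, y = c • planePerp x) :
    vecMulVec x (planePerp x) ∈ L := by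
  obtain ⟨c, rfl⟩ := hpar
  have hc : c ≠ 0 := by rintro rfl; simp at hy
  rwa [vecMulVec_smul, L.smul_mem_iff hc] at hL

theorem stmt19_general (L : Submodule ℂ (Matrix (Fin 3) (Fin 3) ℂ))
    (O : Set (Fin 3 → ℂ)) (hO : IsOpen O) (hOne : O.Nonempty)
    (φ : (Fin 3 → ℂ) → (Fin 3 → ℂ))
    (hφnz : ∀ x ∈ O, φ x ≠ 0)
    (hφL : ∀ x ∈ O, Matrix.vecMulVec x (φ x) ∈ L)
    (hφpar : ∀ x ∈ O, ∃ c : ℂ,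
      φ x = c • ![-(starRingEnd ℂ (x 1)), starRingEnd ℂ (x 0), 0]) :
    5 ≤ Module.finrank ℂ L := by
  obtain ⟨p, hp⟩ := hOne
  have hQ : ∀ u, vecMulVec u (planePerp u) ∈ L := fun u =>
    (L.restrictScalars ℝ).mem_of_parallelogram_of_isOpen (fun x => vecMulVec x (planePerp x))
      vecMulVec_planePerp_parallelogram hO hp
      (fun x hx => vecMulVec_planePerp_mem (hφnz x hx) (hφL x hx) (hφpar x hx)) u
  have hspan : Submodule.span ℂ (Set.range planePerpTestMatrices) ≤ L :=
    Submodule.span_le.mpr (Set.range_subset_iff.mpr fun i => hQ _)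
  calc 5 = Module.finrank ℂ (Submodule.span ℂ (Set.range planePerpTestMatrices)) := by
        rw [finrank_span_eq_card linearIndependent_planePerpTestMatrices, Fintype.card_fin]
    _ ≤ Module.finrank ℂ L := Submodule.finrank_mono hspan

/-- let `L ⊆ Mat₃ₓ₃(ℂ)` be a subspace such that every nonzero `x ∈ ℂ³` has a
nonzero `x'` orthogonal to it with `x ⊗ x' ∈ L`, the choice being continuous on an open set
`O` via `φ` with `⟨x, φ(x)⟩ = 0` and `x ⊗ φ(x) ∈ L`; if moreover the image of `φ` lies in
the plane `[e₁, e₂]`, i.e. `φ(x)` is parallel to `-x̄₂ e₁ + x̄₁ e₂`, then `dim L ≥ 5`. -/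
theorem stmt19 (L : Submodule ℂ (Matrix (Fin 3) (Fin 3) ℂ))
    (hL : ∀ x : Fin 3 → ℂ, x ≠ 0 → ∃ x' : Fin 3 → ℂ, x' ≠ 0 ∧
      dotProduct (star x) x' = 0 ∧ Matrix.vecMulVec x x' ∈ L)
    (O : Set (Fin 3 → ℂ)) (hO : IsOpen O) (hOne : O.Nonempty)
    (φ : (Fin 3 → ℂ) → (Fin 3 → ℂ)) (hφcont : ContinuousOn φ O)
    (hφnz : ∀ x ∈ O, φ x ≠ 0)
    (hφorth : ∀ x ∈ O, dotProduct (star x) (φ x) = 0)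
    (hφL : ∀ x ∈ O, Matrix.vecMulVec x (φ x) ∈ L)
    (hφpar : ∀ x ∈ O, ∃ c : ℂ,
      φ x = c • ![-(starRingEnd ℂ (x 1)), starRingEnd ℂ (x 0), 0]) :
    5 ≤ Module.finrank ℂ L :=
  stmt19_general L O hO hOne φ hφnz hφL hφpar
end
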